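/- Let E be a directed graph, K a field, x ∈ ∂E a path that is not rational, and a ∈ (K^*)^{E^1}. Then the twisted Chen module V^a_{[x]} is a ℤ-graded L_K(E)-module: writing [x]_k = {y ∈ [x] : y ∼_k x}, the class [x] is the disjoint union of the sets [x]_k over k ∈ ℤ, and with V_{[x],k} the K-span of [x]_k one has V^a_{[x]} = ⊕_{k∈ℤ} V_{[x],k} and (L_K(E))_m · V_{[x],k} ⊆ V_{[x],m+k} for all m, k ∈ ℤ. -/

import Mathlib

open scoped Classical

/-- A directed graph: vertices, edges, source and range maps. -/
structure DirGraph : Type 1 where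
  V : Type
  E : Type
  s : E → V
  r : E → V

namespace DirGraph

variable (G : DirGraph)

/-- A finite path: a source vertex together with a compatible list of edges
(the empty list gives the path of length 0 at `src`). -/
structure FinPath where
  src : G.V
  edges : List G.E
  src_eq : ∀ e ∈ edges.head?, G.s e = src
  chain : edges.Chain' (fun e f => G.r e = G.s f)

variable {G}

/-- The range of a finite path. -/
def FinPath.rng (μ : G.FinPath) : G.V :=
  ((μ.edges.getLast?).map G.r).getD μ.src

/-- The length of a finite path. -/
def FinPath.length (μ : G.FinPath) : ℕ := μ.edges.length

variable (G)

/-- An infinite path. -/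
structure InfPath where
  edges : ℕ → G.E
  chain : ∀ n, G.r (edges n) = G.s (edges (n + 1))

/-- The source of an infinite path. -/
def InfPath.src {G : DirGraph} (p : G.InfPath) : G.V := G.s (p.edges 0)

def IsSink (v : G.V) : Prop := ∀ e, G.s e ≠ v

def IsInfEmitter (v : G.V) : Prop := {e | G.s e = v}.Infinite

def IsSingular (v : G.V) : Prop := IsSink G v ∨ IsInfEmitter G v

/-- Boundary paths: infinite paths, together with finite paths ending in a singular vertex. -/
def BPath : Type := {x : G.FinPath ⊕ G.InfPath // ∀ μ, x = Sum.inl μ → IsSingular G μ.rng}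

variable {G}

/-- The source of a boundary path. -/
def BPath.src (x : G.BPath) : G.V :=
  match x.1 with
  | Sum.inl μ => μ.src
  | Sum.inr p => p.src

def BPath.IsInfinite (x : G.BPath) : Prop := ∃ p, x.1 = Sum.inr p

/-- `IsCat μ p x` means `x = μ p`, i.e. `x` is the concatenation of the finite path `μ`
with the boundary path `p` (in particular `r(μ) = s(p)`). -/
def IsCat (μ : G.FinPath) (p x : G.BPath) : Prop :=
  μ.rng = p.src ∧
  match p.1, x.1 with
  | Sum.inl q, Sum.inl ξ => ξ.src = μ.src ∧ ξ.edges = μ.edges ++ q.edges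
  | Sum.inr q, Sum.inr ξ =>
      (∀ (i : ℕ) (h : i < μ.edges.length), ξ.edges i = μ.edges.get ⟨i, h⟩) ∧
      (∀ i : ℕ, ξ.edges (μ.edges.length + i) = q.edges i)
  | _, _ => False

/-- `x ∼_k y` : tail equivalence with lag `k`. -/
def TailEqLag (x y : G.BPath) (k : ℤ) : Prop :=
  ∃ (μ ν : G.FinPath) (p : G.BPath),
    IsCat μ p x ∧ IsCat ν p y ∧ (μ.length : ℤ) - (ν.length : ℤ) = k

/-- Tail equivalence. -/
def TailEq (x y : G.BPath) : Prop := ∃ k, TailEqLag x y k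

/-- The tail-equivalence class (orbit) of a boundary path. -/
def orbit (x : G.BPath) : Set G.BPath := {y | TailEq y x}

/-- A closed path: positive length, same source and range. -/
def FinPath.IsClosed (c : G.FinPath) : Prop := 0 < c.length ∧ c.rng = c.src

/-- A boundary path is rational if it is tail equivalent to `c^∞` for some closed path `c`;
here `c^∞` is characterized as the unique boundary path `p` with `p = c p`. -/
def IsRational (x : G.BPath) : Prop :=
  ∃ (c : G.FinPath) (p : G.BPath), 0 < c.length ∧ IsCat c p p ∧ TailEq x p

/-- A simple closed path: a closed path which is not a proper power of a closed path. -/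
def FinPath.IsSimpleClosed (c : G.FinPath) : Prop :=
  c.IsClosed ∧
    ¬ ∃ (d : G.FinPath) (n : ℕ), 2 ≤ n ∧ d.IsClosed ∧ c.src = d.src ∧
        c.edges = (List.replicate n d.edges).flatten

/-- A cycle: a closed path passing through no vertex twice. -/
def FinPath.IsCycle (c : G.FinPath) : Prop := c.IsClosed ∧ (c.edges.map G.s).Nodup

/-- An exit for a finite path. -/
def FinPath.HasExit (c : G.FinPath) : Prop :=
  ∃ (i : ℕ) (h : i < c.edges.length) (e : G.E),
    G.s e = G.s (c.edges.get ⟨i, h⟩) ∧ e ≠ c.edges.get ⟨i, h⟩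

/-- `c` is a rotation of `d`. -/
def FinPath.IsRotationOf (c d : G.FinPath) : Prop := ∃ i, c.edges = d.edges.rotate i

/-- A maximal cycle: a cycle such that any cycle from which there is a finite path to its
source is a rotation of it. -/
def FinPath.IsMaxCycle (c : G.FinPath) : Prop :=
  c.IsCycle ∧ ∀ d : G.FinPath, d.IsCycle →
    (∃ μ : G.FinPath, μ.src = d.src ∧ μ.rng = c.src) → d.IsRotationOf c

/-- A maximal sink: a sink with no finite path from the source of any cycle to it. -/
def IsMaxSink (G : DirGraph) (v : G.V) : Prop :=
  IsSink G v ∧ ¬ ∃ (d μ : G.FinPath), d.IsCycle ∧ μ.src = d.src ∧ μ.rng = v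

/-- A graph is row-finite if every vertex emits finitely many edges. -/
def RowFinite (G : DirGraph) : Prop := ∀ v : G.V, {e | G.s e = v}.Finite

/-- The set of predecessors of a vertex. -/
def preds (G : DirGraph) (v : G.V) : Set G.V := {w | ∃ μ : G.FinPath, μ.src = w ∧ μ.rng = v}

/-- The finite path of length 0 at a vertex. -/
def vertexPath (G : DirGraph) (v : G.V) : G.FinPath :=
  ⟨v, [], by intro e he; simp at he, List.isChain_nil⟩

/-- A singular vertex, seen as a boundary path. -/
def vertexBPath (G : DirGraph) (v : G.V) (h : IsSingular G v) : G.BPath :=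
  ⟨Sum.inl (vertexPath G v), by
    intro μ hμ
    injection hμ with h2
    subst h2
    exact h⟩

/-- The finite path consisting of a single edge. -/
def singleE (G : DirGraph) (e : G.E) : G.FinPath :=
  ⟨G.s e, [e], by
    intro f hf
    simp only [List.head?_cons, Option.mem_def, Option.some.injEq] at hf
    subst hf
    rfl, List.isChain_singleton e⟩

/-- `a_μ`: the product of the values of `a` along a finite path. -/
def aval {G : DirGraph} {K : Type} [Field K] (a : G.E → K) (μ : G.FinPath) : K :=
  (μ.edges.map a).prod

/-! ## The Leavitt path algebra -/

/-- Generators of the Leavitt path algebra: vertices, edges and ghost edges. -/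
inductive Gen (G : DirGraph) : Type
  | vtx : G.V → Gen G
  | edg : G.E → Gen G
  | ghd : G.E → Gen G

/-- The defining relations of the Leavitt path algebra. -/
inductive LRel (G : DirGraph) (K : Type) [Field K] :
    FreeAlgebra K (Gen G) → FreeAlgebra K (Gen G) → Prop
  | vv_eq (v : G.V) :
      LRel G K (FreeAlgebra.ι K (Gen.vtx v) * FreeAlgebra.ι K (Gen.vtx v))
        (FreeAlgebra.ι K (Gen.vtx v))
  | vv_ne {v w : G.V} (h : v ≠ w) :
      LRel G K (FreeAlgebra.ι K (Gen.vtx v) * FreeAlgebra.ι K (Gen.vtx w)) 0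
  | e1l (e : G.E) :
      LRel G K (FreeAlgebra.ι K (Gen.vtx (G.s e)) * FreeAlgebra.ι K (Gen.edg e))
        (FreeAlgebra.ι K (Gen.edg e))
  | e1r (e : G.E) :
      LRel G K (FreeAlgebra.ι K (Gen.edg e) * FreeAlgebra.ι K (Gen.vtx (G.r e)))
        (FreeAlgebra.ι K (Gen.edg e))
  | e2l (e : G.E) :
      LRel G K (FreeAlgebra.ι K (Gen.vtx (G.r e)) * FreeAlgebra.ι K (Gen.ghd e))
        (FreeAlgebra.ι K (Gen.ghd e))
  | e2r (e : G.E) :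
      LRel G K (FreeAlgebra.ι K (Gen.ghd e) * FreeAlgebra.ι K (Gen.vtx (G.s e)))
        (FreeAlgebra.ι K (Gen.ghd e))
  | ck1_eq (e : G.E) :
      LRel G K (FreeAlgebra.ι K (Gen.ghd e) * FreeAlgebra.ι K (Gen.edg e))
        (FreeAlgebra.ι K (Gen.vtx (G.r e)))
  | ck1_ne {e f : G.E} (h : e ≠ f) :
      LRel G K (FreeAlgebra.ι K (Gen.ghd e) * FreeAlgebra.ι K (Gen.edg f)) 0
  | ck2 (v : G.V) (hfin : {e | G.s e = v}.Finite) (hne : ∃ e, G.s e = v) :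
      LRel G K (FreeAlgebra.ι K (Gen.vtx v))
        (∑ e ∈ hfin.toFinset, FreeAlgebra.ι K (Gen.edg e) * FreeAlgebra.ι K (Gen.ghd e))

/-- The Leavitt path algebra of `G` over `K`. -/
abbrev LPA (G : DirGraph) (K : Type) [Field K] : Type := RingQuot (LRel G K)

/-- The image of a vertex in the Leavitt path algebra. -/
def ofV (G : DirGraph) (K : Type) [Field K] (v : G.V) : LPA G K :=
  RingQuot.mkAlgHom K (LRel G K) (FreeAlgebra.ι K (Gen.vtx v))

/-- The image of an edge in the Leavitt path algebra. -/
def ofE (G : DirGraph) (K : Type) [Field K] (e : G.E) : LPA G K :=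
  RingQuot.mkAlgHom K (LRel G K) (FreeAlgebra.ι K (Gen.edg e))

/-- The image of a ghost edge in the Leavitt path algebra. -/
def ofG (G : DirGraph) (K : Type) [Field K] (e : G.E) : LPA G K :=
  RingQuot.mkAlgHom K (LRel G K) (FreeAlgebra.ι K (Gen.ghd e))

/-- The element `μ` of the Leavitt path algebra associated to a finite path `μ`. -/
def pathElem (G : DirGraph) (K : Type) [Field K] (μ : G.FinPath) : LPA G K :=
  ofV G K μ.src * (μ.edges.map (ofE G K)).prod

/-- The element `μ^*` of the Leavitt path algebra associated to a finite path `μ`. -/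
def pathStarElem (G : DirGraph) (K : Type) [Field K] (μ : G.FinPath) : LPA G K :=
  (μ.edges.reverse.map (ofG G K)).prod * ofV G K μ.src

/-- The degree-`n` homogeneous component of the canonical `ℤ`-grading of the Leavitt
path algebra: the span of the monomials `μ ν^*` with `|μ| - |ν| = n`. -/
def LPAdeg (G : DirGraph) (K : Type) [Field K] (n : ℤ) : Submodule K (LPA G K) :=
  Submodule.span K {x | ∃ μ ν : G.FinPath, μ.rng = ν.rng ∧
    (μ.length : ℤ) - (ν.length : ℤ) = n ∧ x = pathElem G K μ * pathStarElem G K ν}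

/-- `W` is a `ℤ`-grading making `M` a graded module over the canonically graded
Leavitt path algebra. -/
def IsModuleGrading (G : DirGraph) (K : Type) [Field K] (M : Type) [AddCommGroup M]
    [Module K M] [Module (LPA G K) M] (W : ℤ → Submodule K M) : Prop :=
  DirectSum.IsInternal W ∧
    ∀ (m k : ℤ) (a : LPA G K) (y : M), a ∈ LPAdeg G K m → y ∈ W k → a • y ∈ W (m + k)

/-- A set is graded (with respect to a grading `W`) if each of its elements is a finite sum
of homogeneous elements of the set. -/
def GradedCarrier {K M : Type} [Field K] [AddCommGroup M] [Module K M]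
    (W : ℤ → Submodule K M) (S : Set M) : Prop :=
  ∀ m ∈ S, ∃ l : List M, (∀ z ∈ l, z ∈ S ∧ ∃ k, z ∈ W k) ∧ l.sum = m

/-- A graded isomorphism between graded modules over the Leavitt path algebra. -/
def GradedIsoLPA (G : DirGraph) (K : Type) [Field K] (M N : Type)
    [AddCommGroup M] [AddCommGroup N] [Module K M] [Module K N]
    [Module (LPA G K) M] [Module (LPA G K) N]
    (W : ℤ → Submodule K M) (W' : ℤ → Submodule K N) : Prop :=
  ∃ f : M ≃ₗ[LPA G K] N, (∀ k, ∀ m ∈ W k, f m ∈ W' k) ∧ ∀ k, ∀ n ∈ W' k, f.symm n ∈ W k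

/-- A module over the Leavitt path algebra is unital if it is generated by the images of the
vertices. -/
def IsUnitalModule (G : DirGraph) (K : Type) [Field K] (M : Type) [AddCommGroup M]
    [Module (LPA G K) M] : Prop :=
  ∀ m : M, m ∈ Submodule.span (LPA G K) {y : M | ∃ (v : G.V) (m' : M), y = ofV G K v • m'}

/-! ## Chen modules, specified by a basis and the action of the generators -/

/-- A specification of the (twisted) Chen module attached to a boundary path `x`:
an `L_K(E)`-module `M` which is a `K'`-vector space with basis the tail-equivalence class
of `x`, the generators acting by the τ-twisted shift formulas. Here `K ⊆ K'` is a field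
extension and `τ : E¹ → K'` is a family of nonzero scalars. -/
structure ChenSpecT (G : DirGraph) (K K' : Type) [Field K] [Field K'] [Algebra K K']
    (τ : G.E → K') (x : G.BPath) (M : Type) [AddCommGroup M] [Module K' M]
    [Module (LPA G K) M] : Type where
  tau_ne : ∀ e, τ e ≠ 0
  basis : Module.Basis (orbit x) K' M
  act_v : ∀ (v : G.V) (p : orbit x),
    ofV G K v • basis p = if v = BPath.src (p : G.BPath) then basis p else 0
  act_e : ∀ (e : G.E) (p q : orbit x), IsCat (singleE G e) (p : G.BPath) (q : G.BPath) →
    ofE G K e • basis p = τ e • basis q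
  act_e_zero : ∀ (e : G.E) (p : orbit x),
    (¬ ∃ q : G.BPath, IsCat (singleE G e) (p : G.BPath) q) → ofE G K e • basis p = 0
  act_g : ∀ (e : G.E) (p q : orbit x), IsCat (singleE G e) (p : G.BPath) (q : G.BPath) →
    ofG G K e • basis q = (τ e)⁻¹ • basis p
  act_g_zero : ∀ (e : G.E) (q : orbit x),
    (¬ ∃ p : G.BPath, IsCat (singleE G e) p (q : G.BPath)) → ofG G K e • basis q = 0

/-- Specification of the Chen module `V_{[x]}^a` twisted by `a : E¹ → K^*`
(`a = 1` gives `V_{[x]}`). -/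
abbrev ChenSpec (G : DirGraph) (K : Type) [Field K] (a : G.E → K) (x : G.BPath) (M : Type)
    [AddCommGroup M] [Module K M] [Module (LPA G K) M] : Type :=
  ChenSpecT G K K a x M

/-- The canonical grading on a Chen module: the degree-`k` component is spanned by the basis
elements tail-equivalent to `x` with lag `k`. -/
def chenW {G : DirGraph} {K' : Type} [Field K'] {x : G.BPath} {M : Type}
    [AddCommGroup M] [Module K' M] (b : Module.Basis (orbit x) K' M) (k : ℤ) : Submodule K' M :=
  Submodule.span K' (⇑b '' {p : orbit x | TailEqLag (p : G.BPath) x k})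

/-! ## The module `K L_x` -/

/-- The set `L_x` of pairs `(y, k)` with `y ∼_k x`. -/
def Lset (G : DirGraph) (x : G.BPath) : Set (G.BPath × ℤ) := {yk | TailEqLag yk.1 x yk.2}

/-- The underlying `K`-vector space of the module `K L_x`, with basis `L_x`. -/
abbrev KLCarrier (G : DirGraph) (K : Type) [Field K] (x : G.BPath) : Type := (Lset G x) →₀ K

/-- Specification of the `L_K(E)`-module structure on `K L_x`, given by
`(μ ν^*) ⬝ (y, k) = (μ p, |μ| - |ν| + k)` when `y = ν p`, and `0` otherwise. The module
structure is encoded as a `K`-algebra homomorphism `ρ` to the endomorphism algebra. -/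
def KLSpec (G : DirGraph) (K : Type) [Field K] (x : G.BPath)
    (ρ : LPA G K →ₐ[K] Module.End K (KLCarrier G K x)) : Prop :=
  (∀ (μ ν : G.FinPath), μ.rng = ν.rng → ∀ (yk zk : Lset G x) (p : G.BPath),
      IsCat ν p (yk : G.BPath × ℤ).1 → IsCat μ p (zk : G.BPath × ℤ).1 →
      (zk : G.BPath × ℤ).2 = (yk : G.BPath × ℤ).2 + (μ.length : ℤ) - (ν.length : ℤ) →
      ρ (pathElem G K μ * pathStarElem G K ν) (Finsupp.single yk 1) = Finsupp.single zk 1) ∧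
  (∀ (μ ν : G.FinPath), μ.rng = ν.rng → ∀ yk : Lset G x,
      (¬ ∃ p : G.BPath, IsCat ν p (yk : G.BPath × ℤ).1) →
      ρ (pathElem G K μ * pathStarElem G K ν) (Finsupp.single yk 1) = 0)

/-- The canonical grading of `K L_x`: `(y, k)` is homogeneous of degree `k`. -/
noncomputable def KLgr (G : DirGraph) (K : Type) [Field K] (x : G.BPath) (k : ℤ) :
    Submodule K (KLCarrier G K x) :=
  Submodule.span K {m | ∃ yk : Lset G x, (yk : G.BPath × ℤ).2 = k ∧ m = Finsupp.single yk 1}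

end DirGraph

/-!
If `y ∼_k x` and `y ∼_{k'} x`, cancelling the common prefix of the two decompositions of `y`
produces two decompositions `x = α p = β p`; if `|α| < |β|`, cancelling once more gives
`p = σ p` with `|σ| = |β| - |α| > 0`, i.e. `p = σ^∞`, and `x` would be rational. So every
`y ∈ [x]` has a well-defined lag, the basis `[x]` is the disjoint union of the fibres `[x]_k`,
and `V^a_{[x]}` is the direct sum of their spans. The generators `v`, `e`, `e^*` send a basis
vector of `[x]_k` to a scalar multiple of one of `[x]_k`, `[x]_{k+1}`, `[x]_{k-1}` (or to `0`),
so a monomial `μ ν^*` raises degrees by `|μ| - |ν|`.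
-/

theorem Module.Basis.isInternal_span_image_fiber {ι κ R M : Type*} [Ring R] [AddCommGroup M]
    [Module R M] [DecidableEq κ] (b : Module.Basis ι R M) (f : ι → κ) :
    DirectSum.IsInternal fun k => Submodule.span R (b '' (f ⁻¹' {k})) := by
  have hsup : ∀ P : κ → Prop, ⨆ (k) (_ : P k), Submodule.span R (b '' (f ⁻¹' {k})) =
      Submodule.span R (b '' (f ⁻¹' {k | P k})) := fun P => by
    rw [← Submodule.span_iUnion₂, ← Set.image_iUnion₂, ← Set.preimage_iUnion₂]
    congr 3
    ext j
    simp
  refine DirectSum.isInternal_submodule_of_iSupIndep_of_iSup_eq_top (fun k => ?_) ?_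
  · rw [hsup (· ≠ k)]
    exact b.linearIndependent.disjoint_span_image
      ((Set.disjoint_singleton_left.mpr fun h : k ≠ k => h rfl).preimage f)
  · simpa using hsup fun _ => True

namespace DirGraph

variable {G : DirGraph}

theorem FinPath.ext {μ ν : G.FinPath} (h₁ : μ.src = ν.src) (h₂ : μ.edges = ν.edges) :
    μ = ν := by
  cases μ; cases ν; simp_all

theorem InfPath.ext {p q : G.InfPath} (h : p.edges = q.edges) : p = q := by
  cases p; cases q; simp_all

theorem FinPath.rng_of_edges_eq_nil {μ : G.FinPath} (h : μ.edges = []) : μ.rng = μ.src := by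
  simp [FinPath.rng, h]

theorem FinPath.rng_of_edges_eq_cons {μ : G.FinPath} {e : G.E} {t : List G.E}
    (h : μ.edges = e :: t) : μ.rng = G.r ((e :: t).getLast (List.cons_ne_nil e t)) := by
  simp [FinPath.rng, h, List.getLast?_eq_some_getLast (List.cons_ne_nil e t)]

def FinPath.cons (e : G.E) (μ : G.FinPath) (h : G.r e = μ.src) : G.FinPath where
  src := G.s e
  edges := e :: μ.edges
  src_eq := by simp
  chain := List.isChain_cons.mpr ⟨fun f hf => h.trans (μ.src_eq f hf).symm, μ.chain⟩

@[simp] theorem FinPath.length_cons (e : G.E) (μ : G.FinPath) (h : G.r e = μ.src) :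
    (μ.cons e h).length = μ.length + 1 := by
  simp [FinPath.cons, FinPath.length]

theorem FinPath.rng_cons (e : G.E) (μ : G.FinPath) (h : G.r e = μ.src) :
    (μ.cons e h).rng = μ.rng := by
  cases hμ : μ.edges with
  | nil => simp [FinPath.rng, FinPath.cons, hμ, h]
  | cons f t =>
    have hcons : (μ.cons e h).edges = e :: f :: t := by simp [FinPath.cons, hμ]
    rw [FinPath.rng_of_edges_eq_cons hcons, FinPath.rng_of_edges_eq_cons hμ, List.getLast_cons]

def FinPath.ofTail (e : G.E) (t : List G.E)
    (h : (e :: t).IsChain (fun a b => G.r a = G.s b)) : G.FinPath where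
  src := G.r e
  edges := t
  src_eq := fun f hf => ((List.isChain_cons.mp h).1 f hf).symm
  chain := (List.isChain_cons.mp h).2

theorem FinPath.rng_ofTail (e : G.E) (t : List G.E) (h) :
    (FinPath.ofTail e t h).rng = G.r ((e :: t).getLast (List.cons_ne_nil e t)) := by
  cases t with
  | nil => rfl
  | cons f t =>
    rw [FinPath.rng_of_edges_eq_cons (e := f) (t := t) rfl, List.getLast_cons_cons]

@[simp] theorem length_singleE (e : G.E) : (singleE G e).length = 1 := rfl

@[simp] theorem length_vertexPath (v : G.V) : (vertexPath G v).length = 0 := rfl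

theorem isCat_vertexPath (p : G.BPath) : IsCat (vertexPath G p.src) p p := by
  obtain ⟨P | P, hp⟩ := p
  · exact ⟨rfl, rfl, rfl⟩
  · exact ⟨rfl, fun i h => absurd h (by simp [vertexPath]), fun i => by simp [vertexPath]⟩

theorem IsCat.src_eq {μ : G.FinPath} {p q : G.BPath} (h : IsCat μ p q) : q.src = μ.src := by
  obtain ⟨hrng, hcat⟩ := h
  obtain ⟨P | P, hp⟩ := p <;> obtain ⟨Q | Q, hq⟩ := q
  · exact hcat.1
  · exact hcat.elim
  · exact hcat.elim
  · show G.s (Q.edges 0) = μ.src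
    cases hμ : μ.edges with
    | nil =>
      rw [show Q.edges 0 = P.edges 0 by simpa [hμ] using hcat.2 0]
      exact hrng.symm.trans (FinPath.rng_of_edges_eq_nil hμ)
    | cons e t =>
      rw [hcat.1 0 (by simp [hμ]), μ.src_eq _ (by simp [hμ])]

theorem IsCat.eq_of_length_eq_zero {μ : G.FinPath} {p q : G.BPath} (h : IsCat μ p q)
    (hμ : μ.length = 0) : p = q := by
  obtain ⟨s0, _ | ⟨e, t⟩, hs, hc⟩ := μ
  · obtain ⟨hrng, hcat⟩ := h
    obtain ⟨P | P, hp⟩ := p <;> obtain ⟨Q | Q, hq⟩ := q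
    · refine Subtype.ext (congrArg Sum.inl (FinPath.ext ?_ hcat.2.symm))
      exact hrng.symm.trans hcat.1.symm
    · exact hcat.elim
    · exact hcat.elim
    · refine Subtype.ext (congrArg Sum.inr (InfPath.ext (funext fun i => ?_)))
      simpa using (hcat.2 i).symm
  · simp [FinPath.length] at hμ

theorem IsCat.singleE_inj {e f : G.E} {p p' q : G.BPath} (h : IsCat (singleE G e) p q)
    (h' : IsCat (singleE G f) p' q) : e = f ∧ p = p' := by
  obtain ⟨hrng, hcat⟩ := h
  obtain ⟨hrng', hcat'⟩ := h'
  obtain ⟨P | P, hp⟩ := p <;> obtain ⟨P' | P', hp'⟩ := p' <;> obtain ⟨Q | Q, hq⟩ := q <;>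
    try first | exact hcat.elim | exact hcat'.elim
  · obtain ⟨rfl, hPP'⟩ := List.cons_eq_cons.mp (hcat.2.symm.trans hcat'.2)
    refine ⟨rfl, Subtype.ext (congrArg Sum.inl (FinPath.ext ?_ hPP'))⟩
    exact hrng.symm.trans hrng'
  · have hef : e = f :=
      (hcat.1 0 (by simp [singleE])).symm.trans (hcat'.1 0 (by simp [singleE]))
    refine ⟨hef, Subtype.ext (congrArg Sum.inr (InfPath.ext (funext fun i => ?_)))⟩
    exact (hcat.2 i).symm.trans (hcat'.2 i)

theorem IsCat.uncons {μ : G.FinPath} {p q : G.BPath} (h : IsCat μ p q) (hμ : 0 < μ.length) :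
    ∃ (e : G.E) (q' : G.BPath) (τ : G.FinPath), τ.length + 1 = μ.length ∧
      IsCat (singleE G e) q' q ∧ IsCat τ p q' := by
  obtain ⟨s0, _ | ⟨e, t⟩, hsrc, hc⟩ := μ
  · simp [FinPath.length] at hμ
  have hs : G.s e = s0 := hsrc e rfl
  let τ : G.FinPath := FinPath.ofTail e t hc
  have hτ : τ.rng = G.r ((e :: t).getLast (List.cons_ne_nil e t)) := FinPath.rng_ofTail e t hc
  obtain ⟨hrng, hcat⟩ := h
  obtain ⟨P | P, hp⟩ := p <;> obtain ⟨Q | Q, hq⟩ := q <;> try exact hcat.elim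
  · have hQ : Q.edges = e :: (t ++ P.edges) := hcat.2
    let q' : G.FinPath := FinPath.ofTail e (t ++ P.edges) (hQ ▸ Q.chain)
    have hq' : q'.rng = Q.rng :=
      (FinPath.rng_ofTail _ _ _).trans (FinPath.rng_of_edges_eq_cons hQ).symm
    refine ⟨e, ⟨Sum.inl q', ?_⟩, τ, rfl, ⟨rfl, hcat.1.trans hs.symm, hQ⟩,
      ⟨hτ.trans hrng, rfl, rfl⟩⟩
    rintro _ ⟨⟩
    exact hq' ▸ hq Q rfl
  · have hQ0 : Q.edges 0 = e := hcat.1 0 (by simp)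
    let q' : G.InfPath := ⟨fun i => Q.edges (1 + i), fun n => Q.chain (1 + n)⟩
    refine ⟨e, ⟨Sum.inr q', by rintro _ ⟨⟩⟩, τ, rfl, ⟨hQ0 ▸ Q.chain 0, ?_, fun i => rfl⟩,
      ⟨hτ.trans hrng, fun i hi => ?_, fun i => ?_⟩⟩
    · intro i hi
      obtain rfl : i = 0 := by simpa [singleE] using hi
      exact hQ0
    · show Q.edges (1 + i) = t.get ⟨i, hi⟩
      rw [Nat.add_comm]
      exact hcat.1 (i + 1) (Nat.succ_lt_succ hi)
    · show Q.edges (1 + (t.length + i)) = P.edges i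
      rw [← hcat.2 i, List.length_cons]
      congr 1
      omega

theorem IsCat.cons {e : G.E} {μ : G.FinPath} {p q r : G.BPath} (he : IsCat (singleE G e) q r)
    (hμ : IsCat μ p q) : ∃ τ : G.FinPath, τ.length = μ.length + 1 ∧ IsCat τ p r := by
  refine ⟨μ.cons e (he.1.trans hμ.src_eq), FinPath.length_cons .., ?_⟩
  refine ⟨(FinPath.rng_cons ..).trans hμ.1, ?_⟩
  obtain ⟨-, hecat⟩ := he
  obtain ⟨-, hμcat⟩ := hμ
  obtain ⟨P | P, hp⟩ := p <;> obtain ⟨Q | Q, hq⟩ := q <;> obtain ⟨R | R, hr⟩ := r <;>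
    try first | exact hecat.elim | exact hμcat.elim
  · exact ⟨hecat.1, hecat.2.trans (congrArg (e :: ·) hμcat.2)⟩
  · refine ⟨fun i hi => ?_, fun i => ?_⟩
    · cases i with
      | zero => exact hecat.1 0 (by simp [singleE])
      | succ i =>
        refine (congrArg R.edges (Nat.add_comm i 1)).trans ?_
        exact (hecat.2 i).trans (hμcat.1 i (Nat.lt_of_succ_lt_succ hi))
    · show R.edges ((e :: μ.edges).length + i) = P.edges i
      rw [List.length_cons, Nat.add_right_comm, Nat.add_comm]
      exact (hecat.2 _).trans (hμcat.2 i)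

theorem IsCat.trans {μ ν : G.FinPath} {p q r : G.BPath} (hμ : IsCat μ q r) (hν : IsCat ν p q) :
    ∃ τ : G.FinPath, τ.length = μ.length + ν.length ∧ IsCat τ p r := by
  obtain ⟨n, hn⟩ : ∃ n, μ.length = n := ⟨_, rfl⟩
  induction n generalizing μ r with
  | zero =>
    obtain rfl := hμ.eq_of_length_eq_zero hn
    exact ⟨ν, by omega, hν⟩
  | succ n ih =>
    obtain ⟨e, r', τ, hτ, he, hτcat⟩ := hμ.uncons (by omega)
    obtain ⟨τ', hτ', hτ'cat⟩ := ih hτcat (by omega)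
    obtain ⟨τ'', hτ'', hτ''cat⟩ := he.cons hτ'cat
    exact ⟨τ'', by omega, hτ''cat⟩

theorem IsCat.cancel {μ₁ μ₂ : G.FinPath} {p₁ p₂ y : G.BPath} (h₁ : IsCat μ₁ p₁ y)
    (h₂ : IsCat μ₂ p₂ y) (hle : μ₁.length ≤ μ₂.length) :
    ∃ σ : G.FinPath, σ.length + μ₁.length = μ₂.length ∧ IsCat σ p₂ p₁ := by
  obtain ⟨n, hn⟩ : ∃ n, μ₁.length = n := ⟨_, rfl⟩
  induction n generalizing μ₁ μ₂ y with
  | zero =>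
    obtain rfl := h₁.eq_of_length_eq_zero hn
    exact ⟨μ₂, by omega, h₂⟩
  | succ n ih =>
    obtain ⟨e₁, y₁, τ₁, hτ₁, he₁, hτ₁cat⟩ := h₁.uncons (by omega)
    obtain ⟨e₂, y₂, τ₂, hτ₂, he₂, hτ₂cat⟩ := h₂.uncons (by omega)
    obtain ⟨-, rfl⟩ := he₁.singleE_inj he₂
    obtain ⟨σ, hσ, hσcat⟩ := ih hτ₁cat hτ₂cat (by omega) (by omega)
    exact ⟨σ, by omega, hσcat⟩

theorem isRational_of_isCat_of_length_lt {α β : G.FinPath} {p x : G.BPath} (hα : IsCat α p x)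
    (hβ : IsCat β p x) (hlt : α.length < β.length) : IsRational x := by
  obtain ⟨σ, hσ, hσcat⟩ := hα.cancel hβ hlt.le
  exact ⟨σ, p, by omega, hσcat, β.length, β, vertexPath G p.src, p, hβ, isCat_vertexPath p,
    by simp⟩

theorem IsCat.length_eq_of_not_isRational {α β : G.FinPath} {p x : G.BPath}
    (hx : ¬ IsRational x) (hα : IsCat α p x) (hβ : IsCat β p x) : α.length = β.length := by
  rcases lt_trichotomy α.length β.length with hlt | heq | hgt
  · exact (hx (isRational_of_isCat_of_length_lt hα hβ hlt)).elim
  · exact heq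
  · exact (hx (isRational_of_isCat_of_length_lt hβ hα hgt)).elim

theorem TailEqLag.prepend {α : G.FinPath} {p q x : G.BPath} {k : ℤ} (h : TailEqLag p x k)
    (hα : IsCat α p q) : TailEqLag q x (k + α.length) := by
  obtain ⟨μ, ν, p', hμ, hν, rfl⟩ := h
  obtain ⟨τ, hτ, hτcat⟩ := hα.trans hμ
  exact ⟨τ, ν, p', hτcat, hν, by omega⟩

theorem TailEqLag.of_prepend {α : G.FinPath} {p q x : G.BPath} {k : ℤ} (h : TailEqLag q x k)
    (hα : IsCat α p q) : TailEqLag p x (k - α.length) := by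
  obtain ⟨μ, ν, p', hμ, hν, rfl⟩ := h
  rcases le_total α.length μ.length with hle | hle
  · obtain ⟨σ, hσ, hσcat⟩ := hα.cancel hμ hle
    exact ⟨σ, ν, p', hσcat, hν, by omega⟩
  · obtain ⟨σ, hσ, hσcat⟩ := hμ.cancel hα hle
    obtain ⟨τ, hτ, hτcat⟩ := hν.trans hσcat
    exact ⟨vertexPath G p.src, τ, p, isCat_vertexPath p, hτcat, by
      rw [length_vertexPath]; omega⟩

theorem TailEqLag.eq_neg_length {ν : G.FinPath} {p x : G.BPath} {k : ℤ} (hx : ¬ IsRational x)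
    (h : TailEqLag p x k) (hν : IsCat ν p x) : k = -ν.length := by
  obtain ⟨α, β, q, hα, hβ, rfl⟩ := h
  obtain ⟨τ, hτ, hτcat⟩ := hν.trans hα
  have := hτcat.length_eq_of_not_isRational hx hβ
  omega

theorem TailEqLag.unique {x y : G.BPath} {k k' : ℤ} (hx : ¬ IsRational x)
    (h : TailEqLag y x k) (h' : TailEqLag y x k') : k = k' := by
  obtain ⟨μ, ν, p, hμ, hν, rfl⟩ := h
  have := (h'.of_prepend hμ).eq_neg_length hx hν
  omega

theorem chenW_eq_span_image_preimage {K : Type} [Field K] {x : G.BPath} (hx : ¬ IsRational x)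
    {M : Type} [AddCommGroup M] [Module K M] (b : Module.Basis (orbit x) K M) (k : ℤ) :
    chenW b k = Submodule.span K (b '' ((fun p : orbit x => p.2.choose) ⁻¹' {k})) := by
  refine congrArg (fun S => Submodule.span K (b '' S)) (Set.ext fun p => ?_)
  exact ⟨fun hp => (TailEqLag.unique hx p.2.choose_spec hp), fun hp => hp ▸ p.2.choose_spec⟩

theorem basis_mem_chenW {K : Type} [Field K] {x : G.BPath} {M : Type} [AddCommGroup M]
    [Module K M] {b : Module.Basis (orbit x) K M} {p : orbit x} {k : ℤ}
    (hp : TailEqLag (p : G.BPath) x k) : b p ∈ chenW b k :=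
  Submodule.subset_span ⟨p, hp, rfl⟩

section ChenModule

variable {K : Type} [Field K] {x : G.BPath} {M : Type} [AddCommGroup M] [Module K M]
  [Module (LPA G K) M] [IsScalarTower K (LPA G K) M]

def degreeShifters (b : Module.Basis (orbit x) K M) (d : ℤ) : Submodule K (LPA G K) where
  carrier := {η | ∀ k, ∀ w ∈ chenW b k, η • w ∈ chenW b (d + k)}
  add_mem' hη hη' k w hw := by
    rw [add_smul]
    exact add_mem (hη k w hw) (hη' k w hw)
  zero_mem' k w _ := by
    rw [zero_smul]
    exact zero_mem _
  smul_mem' c η hη k w hw := by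
    rw [smul_assoc]
    exact Submodule.smul_mem _ c (hη k w hw)

variable {b : Module.Basis (orbit x) K M}

theorem mem_degreeShifters_of_basis {η : LPA G K} {d : ℤ}
    (h : ∀ (p : orbit x) (k : ℤ), TailEqLag (p : G.BPath) x k → η • b p ∈ chenW b (d + k)) :
    η ∈ degreeShifters b d := by
  intro k w hw
  induction hw using Submodule.span_induction with
  | mem w hw =>
    obtain ⟨p, hp, rfl⟩ := hw
    exact h p k hp
  | zero => rw [smul_zero]; exact zero_mem _
  | add w w' _ _ hw hw' => rw [smul_add]; exact add_mem hw hw'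
  | smul c w _ hw => rw [smul_comm]; exact Submodule.smul_mem _ c hw

theorem one_mem_degreeShifters : (1 : LPA G K) ∈ degreeShifters b 0 := by
  intro k w hw
  rwa [one_smul, zero_add]

theorem mul_mem_degreeShifters {η η' : LPA G K} {d d' : ℤ} (hη : η ∈ degreeShifters b d)
    (hη' : η' ∈ degreeShifters b d') : η * η' ∈ degreeShifters b (d + d') := by
  intro k w hw
  rw [mul_smul, add_assoc]
  exact hη _ _ (hη' k w hw)

theorem list_prod_mem_degreeShifters {l : List (LPA G K)} {d : ℤ}
    (hl : ∀ η ∈ l, η ∈ degreeShifters b d) : l.prod ∈ degreeShifters b (l.length * d) := by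
  induction l with
  | nil => simpa using one_mem_degreeShifters
  | cons η l ih =>
    rw [List.prod_cons, List.length_cons, Nat.cast_succ, add_mul, one_mul, add_comm]
    exact mul_mem_degreeShifters (hl η (by simp)) (ih fun η' hη' => hl η' (by simp [hη']))

variable {a : G.E → K}

theorem ofV_mem_degreeShifters (sp : ChenSpec G K a x M) (v : G.V) :
    ofV G K v ∈ degreeShifters sp.basis 0 := by
  refine mem_degreeShifters_of_basis fun p k hp => ?_
  rw [sp.act_v, zero_add]
  split_ifs
  · exact basis_mem_chenW hp
  · exact zero_mem _

theorem ofE_mem_degreeShifters (sp : ChenSpec G K a x M) (e : G.E) :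
    ofE G K e ∈ degreeShifters sp.basis 1 := by
  refine mem_degreeShifters_of_basis fun p k hp => ?_
  by_cases hq : ∃ q : G.BPath, IsCat (singleE G e) (p : G.BPath) q
  · obtain ⟨q, hpq⟩ := hq
    have hq : TailEqLag q x (1 + k) := by simpa [add_comm] using hp.prepend hpq
    rw [sp.act_e e p ⟨q, _, hq⟩ hpq]
    exact Submodule.smul_mem _ _ (basis_mem_chenW hq)
  · rw [sp.act_e_zero e p hq]
    exact zero_mem _

theorem ofG_mem_degreeShifters (sp : ChenSpec G K a x M) (e : G.E) :
    ofG G K e ∈ degreeShifters sp.basis (-1) := by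
  refine mem_degreeShifters_of_basis fun p k hp => ?_
  by_cases hq : ∃ q : G.BPath, IsCat (singleE G e) q (p : G.BPath)
  · obtain ⟨q, hqp⟩ := hq
    have hq : TailEqLag q x (-1 + k) := by simpa [neg_add_eq_sub] using hp.of_prepend hqp
    rw [sp.act_g e ⟨q, _, hq⟩ p hqp]
    exact Submodule.smul_mem _ _ (basis_mem_chenW hq)
  · rw [sp.act_g_zero e p hq]
    exact zero_mem _

theorem pathElem_mem_degreeShifters (sp : ChenSpec G K a x M) (μ : G.FinPath) :
    pathElem G K μ ∈ degreeShifters sp.basis μ.length := by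
  have h := mul_mem_degreeShifters (ofV_mem_degreeShifters sp μ.src)
    (list_prod_mem_degreeShifters (l := μ.edges.map (ofE G K)) (d := 1) fun η hη => by
      obtain ⟨e, -, rfl⟩ := List.mem_map.mp hη
      exact ofE_mem_degreeShifters sp e)
  simpa [pathElem, FinPath.length] using h

theorem pathStarElem_mem_degreeShifters (sp : ChenSpec G K a x M) (ν : G.FinPath) :
    pathStarElem G K ν ∈ degreeShifters sp.basis (-ν.length) := by
  have h := mul_mem_degreeShifters
    (list_prod_mem_degreeShifters (l := ν.edges.reverse.map (ofG G K)) (d := -1) fun η hη => by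
      obtain ⟨e, -, rfl⟩ := List.mem_map.mp hη
      exact ofG_mem_degreeShifters sp e)
    (ofV_mem_degreeShifters sp ν.src)
  simpa [pathStarElem, FinPath.length] using h

theorem LPAdeg_le_degreeShifters (sp : ChenSpec G K a x M) (m : ℤ) :
    LPAdeg G K m ≤ degreeShifters sp.basis m := by
  refine Submodule.span_le.mpr ?_
  rintro _ ⟨μ, ν, -, rfl, rfl⟩
  exact mul_mem_degreeShifters (pathElem_mem_degreeShifters sp μ)
    (pathStarElem_mem_degreeShifters sp ν)

end ChenModule

end DirGraph

open DirGraph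

/-- for `x ∈ ∂E` not rational and `a ∈ (K^*)^{E¹}`, the twisted Chen
module `V_{[x]}^a` is a `ℤ`-graded `L_K(E)`-module: the sets `[x]_k` are pairwise
disjoint, `V_{[x]}^a = ⊕_k V_{[x],k}` where `V_{[x],k}` is the span of `[x]_k`, and
`(L_K(E))_m ⬝ V_{[x],k} ⊆ V_{[x],m+k}`. -/
theorem stmt_1 (G : DirGraph) (K : Type) [Field K] (a : G.E → K)
    (x : G.BPath) (hx : ¬ IsRational x)
    (M : Type) [AddCommGroup M] [Module K M] [Module (LPA G K) M]
    [IsScalarTower K (LPA G K) M]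
    (sp : ChenSpec G K a x M) :
    (∀ (k k' : ℤ) (y : G.BPath), TailEqLag y x k → TailEqLag y x k' → k = k') ∧
      DirectSum.IsInternal (fun k => chenW sp.basis k) ∧
      (∀ (m k : ℤ) (η : LPA G K) (w : M), η ∈ LPAdeg G K m → w ∈ chenW sp.basis k →
        η • w ∈ chenW sp.basis (m + k)) := by
  refine ⟨fun k k' y h h' => h.unique hx h', ?_, fun m k η w hη hw =>
    LPAdeg_le_degreeShifters sp m hη k w hw⟩
  simp only [chenW_eq_span_image_preimage hx]
  exact sp.basis.isInternal_span_image_fiber _
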